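/- arXiv:2002.01610 — 2 statements merged into one kernel-verified Lean document; each statement's English description precedes it below -/
import Mathlib

section
/- Any two distinct output AOEs arising from the same canonical AOE have the same set of unlabeled edges; more precisely, if 𝒜₁ and 𝒜₂ are output AOEs for the same canonical input, and if (u, v) is an unlabeled edge of 𝒜₁ with u = End_{𝒜₁}(T) and v = St_{𝒜₁}(T'), then in 𝒜₂ there is an unlabeled edge from End_{𝒜₂}(T) to St_{𝒜₂}(T'). -/
/-!
All simplification rules preserve the task reachability relation `A.reach` (whether `En t`
reaches `St t'`) and the invariants collected in `AOE.WellFormed`: acyclicity, unlabeled edges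
leave task ends or sources and enter task starts or sinks, `En a = St b` only where
reachability forces it (`RequiresMerge`), and a global source and sink. So all outputs of one
canonical AOE share the task reachability of the input.

In an output no rule applies: blocked rule 2 excludes detours around an unlabeled edge, and
blocked rule 3 excludes an unlabeled edge `(En t, St t')` such that every task reaching `t'`
reaches every task reached from `t`. From this, `(En t, St t')` is an unlabeled edge of an
output exactly when `RequiresEdge A.reach t t'`, a condition on task reachability alone.
-/

namespace AOEPaper

/-- An activity-on-edge graph: a directed multigraph on the vertex set `verts`,
whose task edges are indexed by the type `T` (the distinct task labels), each task `t`
being an edge from `St t` to `En t`, together with a multiset `unl` of unlabeled edges. -/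
structure AOE (V T : Type) where
  verts : Finset V
  St : T → V
  En : T → V
  stMem : ∀ t, St t ∈ verts
  enMem : ∀ t, En t ∈ verts
  unl : Multiset (V × V)
  unlMem : ∀ e ∈ unl, e.1 ∈ verts ∧ e.2 ∈ verts

/-- One-step adjacency: an unlabeled edge or a task edge from `a` to `b`. -/
def AOE.adj {V T : Type} (G : AOE V T) (a b : V) : Prop :=
  (a, b) ∈ G.unl ∨ ∃ t, G.St t = a ∧ G.En t = b

/-- The graph has no directed cycle. -/
def AOE.Acyclic {V T : Type} (G : AOE V T) : Prop :=
  ∀ v : V, ¬ Relation.TransGen G.adj v v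

/-- Task `t` reaches task `t'`: `En t = St t'` or there is a directed path from
`En t` to `St t'` (intended only for `t ≠ t'`). -/
def AOE.reach {V T : Type} (G : AOE V T) (t t' : T) : Prop :=
  Relation.ReflTransGen G.adj (G.En t) (G.St t')

/-- A sequence of tasks in which each task reaches the next. -/
def AOE.chain {V T : Type} (G : AOE V T) (l : List T) : Prop :=
  l.Chain' fun t t' => t ≠ t' ∧ G.reach t t'

/-- A potential critical path: a maximal sequence of tasks in which each task
reaches the next (not a subsequence of any other such sequence). -/
def AOE.critPath {V T : Type} (G : AOE V T) (l : List T) : Prop :=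
  G.chain l ∧ ∀ l' : List T, G.chain l' → l.Sublist l' → l' = l

/-- Two AOEs with the same task labels are equivalent if they have the same set of
potential critical paths. -/
def AOE.Equiv {V W T : Type} (G : AOE V T) (H : AOE W T) : Prop :=
  ∀ l : List T, G.critPath l ↔ H.critPath l

/-- An AOE is optimal if it minimizes the number of vertices in its equivalence class. -/
def Optimal {W T : Type} (G : AOE W T) : Prop :=
  ∀ (U : Type) (H : AOE U T), H.Acyclic → AOE.Equiv G H → G.verts.card ≤ H.verts.card

/-- The vertex map replacing `v` by `u`. -/
def mergeV {V : Type} [DecidableEq V] (u v x : V) : V := if x = v then u else x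

theorem mergeV_mem {V : Type} [DecidableEq V] {S : Finset V} (u v x : V) (hx : x ∈ S) :
    mergeV u v x ∈ insert u (S.erase v) := by
  unfold mergeV
  split_ifs with h
  · exact Finset.mem_insert_self _ _
  · exact Finset.mem_insert_of_mem (Finset.mem_erase.mpr ⟨h, hx⟩)

/-- Merge vertices `u` and `v` into the single vertex `u`. -/
def AOE.merge {V T : Type} [DecidableEq V] (G : AOE V T) (u v : V) : AOE V T where
  verts := insert u (G.verts.erase v)
  St t := mergeV u v (G.St t)
  En t := mergeV u v (G.En t)
  stMem t := mergeV_mem u v (G.St t) (G.stMem t)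
  enMem t := mergeV_mem u v (G.En t) (G.enMem t)
  unl := G.unl.map fun e => (mergeV u v e.1, mergeV u v e.2)
  unlMem := by
    intro e he
    rw [Multiset.mem_map] at he
    obtain ⟨a, ha, rfl⟩ := he
    obtain ⟨h1, h2⟩ := G.unlMem a ha
    exact ⟨mergeV_mem u v a.1 h1, mergeV_mem u v a.2 h2⟩

/-- Delete one copy of the unlabeled edge `(u, v)`. -/
def AOE.delUnl {V T : Type} [DecidableEq V] (G : AOE V T) (u v : V) : AOE V T where
  verts := G.verts
  St := G.St
  En := G.En
  stMem := G.stMem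
  enMem := G.enMem
  unl := G.unl.erase (u, v)
  unlMem := fun e he => G.unlMem e (Multiset.mem_of_mem_erase he)

/-- Rule 1 (outgoing version): `u` and `v` are distinct vertices with no outgoing task
edges and precisely the same outgoing neighbors. -/
def Rule1OutCond {V T : Type} (G : AOE V T) (u v : V) : Prop :=
  u ∈ G.verts ∧ v ∈ G.verts ∧ u ≠ v ∧
    (∀ t, G.St t ≠ u) ∧ (∀ t, G.St t ≠ v) ∧ ∀ w, G.adj u w ↔ G.adj v w

/-- Rule 1 (incoming version): `u` and `v` are distinct vertices with no incoming task
edges and precisely the same incoming neighbors. -/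
def Rule1InCond {V T : Type} (G : AOE V T) (u v : V) : Prop :=
  u ∈ G.verts ∧ v ∈ G.verts ∧ u ≠ v ∧
    (∀ t, G.En t ≠ u) ∧ (∀ t, G.En t ≠ v) ∧ ∀ w, G.adj w u ↔ G.adj w v

/-- Rule 2: `(u, v)` is an unlabeled edge and there is another directed path from `u`
to `v` not using this edge. -/
def Rule2Cond {V T : Type} [DecidableEq V] (G : AOE V T) (u v : V) : Prop :=
  (u, v) ∈ G.unl ∧ Relation.TransGen (G.delUnl u v).adj u v

/-- Rule 3: `(u, v)` is an unlabeled edge such that (i) there is no other path from `u`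
to `v`; (ii) if `u` has an outgoing task then `v` has no incoming edge other than `(u,v)`;
(iii) if `v` has an incoming task then `u` has no outgoing edge other than `(u,v)`;
(iv) every incoming neighbor of `v` has a path to every outgoing neighbor of `u`. -/
def Rule3Cond {V T : Type} [DecidableEq V] (G : AOE V T) (u v : V) : Prop :=
  (u, v) ∈ G.unl ∧
  (¬ Relation.TransGen (G.delUnl u v).adj u v) ∧
  ((∃ t, G.St t = u) → (∀ t, G.En t ≠ v) ∧ ∀ w, (w, v) ∈ G.unl → w = u) ∧
  ((∃ t, G.En t = v) → (∀ t, G.St t ≠ u) ∧ ∀ w, (u, w) ∈ G.unl → w = v) ∧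
  ∀ w z, G.adj w v → G.adj u z → Relation.ReflTransGen G.adj w z

/-- One application of a simplification rule. -/
inductive Step {V T : Type} [DecidableEq V] : AOE V T → AOE V T → Prop
  | rule1out {G : AOE V T} (u v : V) : Rule1OutCond G u v → Step G (G.merge u v)
  | rule1in {G : AOE V T} (u v : V) : Rule1InCond G u v → Step G (G.merge u v)
  | rule2 {G : AOE V T} (u v : V) : Rule2Cond G u v → Step G (G.delUnl u v)
  | rule3 {G : AOE V T} (u v : V) : Rule3Cond G u v → Step G ((G.delUnl u v).merge u v)

/-- A canonical AOE: the naive expansion of an activity-on-node graph. Each task has its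
own pair of endpoint vertices, all pairwise distinct; there are a global start vertex `s`
and a global end vertex `e`; unlabeled edges other than those leaving `s` or entering `e`
go from end vertices of tasks to start vertices of tasks; `s` has unlabeled edges to
exactly the vertices whose only incoming edges come from `s`, and `e` has unlabeled edges
from exactly the vertices whose only outgoing edges go to `e`. -/
def Canonical {V T : Type} [DecidableEq V] [Fintype T] (G : AOE V T) : Prop :=
  G.Acyclic ∧ G.unl.Nodup ∧
  Function.Injective G.St ∧ Function.Injective G.En ∧
  (∀ t t' : T, G.St t ≠ G.En t') ∧
  ∃ s e : V, s ≠ e ∧ s ∈ G.verts ∧ e ∈ G.verts ∧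
    (∀ t, G.St t ≠ s ∧ G.St t ≠ e ∧ G.En t ≠ s ∧ G.En t ≠ e) ∧
    (G.verts =
      insert s (insert e (Finset.image G.St Finset.univ ∪ Finset.image G.En Finset.univ))) ∧
    (∀ a b : V, (a, b) ∈ G.unl → a ≠ s → b ≠ e → (∃ t, G.En t = a) ∧ ∃ t', G.St t' = b) ∧
    (∀ b : V, (s, b) ∈ G.unl ↔
      b ∈ G.verts ∧ b ≠ s ∧ (∀ t, G.En t ≠ b) ∧ ∀ a, (a, b) ∈ G.unl → a = s) ∧
    (∀ a : V, (a, e) ∈ G.unl ↔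
      a ∈ G.verts ∧ a ≠ e ∧ (∀ t, G.St t ≠ a) ∧ ∀ b, (a, b) ∈ G.unl → b = e)

/-- An output AOE: obtained from a canonical AOE by a finite sequence of rule
applications, such that no rule can still be applied. -/
def IsOutput {V T : Type} [DecidableEq V] [Fintype T] (G A : AOE V T) : Prop :=
  Canonical G ∧ Relation.ReflTransGen Step G A ∧ ∀ B : AOE V T, ¬ Step A B

theorem mergeSetV_mem {V : Type} [DecidableEq V] {S : Finset V} (C : Finset V) (c x : V)
    (hx : x ∈ S) : (if x ∈ C then c else x) ∈ insert c (S \ C) := by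
  split_ifs with h
  · exact Finset.mem_insert_self _ _
  · exact Finset.mem_insert_of_mem (Finset.mem_sdiff.mpr ⟨hx, h⟩)

/-- Merge all vertices of `C` into the single vertex `c`. -/
def AOE.mergeSet {V T : Type} [DecidableEq V] (G : AOE V T) (C : Finset V) (c : V) :
    AOE V T where
  verts := insert c (G.verts \ C)
  St t := if G.St t ∈ C then c else G.St t
  En t := if G.En t ∈ C then c else G.En t
  stMem t := mergeSetV_mem C c (G.St t) (G.stMem t)
  enMem t := mergeSetV_mem C c (G.En t) (G.enMem t)
  unl := G.unl.map fun e => (if e.1 ∈ C then c else e.1, if e.2 ∈ C then c else e.2)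
  unlMem := by
    intro e he
    rw [Multiset.mem_map] at he
    obtain ⟨a, ha, rfl⟩ := he
    obtain ⟨h1, h2⟩ := G.unlMem a ha
    exact ⟨mergeSetV_mem C c a.1 h1, mergeSetV_mem C c a.2 h2⟩

open Relation

section Relation

variable {α β : Type*} {r s : α → α → Prop}

lemma reflTransGen_or_through {u v a b : α} (hs : ∀ x y, s x y → r x y ∨ x = u ∧ y = v)
    (h : ReflTransGen s a b) :
    ReflTransGen r a b ∨ ReflTransGen r a u ∧ ReflTransGen r v b := by
  induction h with
  | refl => exact .inl .refl
  | @tail b c _ hbc ih =>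
    rcases hs b c hbc with hbc | ⟨rfl, rfl⟩
    · exact ih.imp (·.tail hbc) (And.imp_right (·.tail hbc))
    · exact .inr ⟨ih.elim id And.left, .refl⟩

lemma exists_reflTransGen_of_lift {s : β → β → Prop} (f : α → β)
    (h : ∀ a y, s (f a) y → ∃ b, f b = y ∧ ReflTransGen r a b) {a : α} {y : β}
    (hy : ReflTransGen s (f a) y) : ∃ b, f b = y ∧ ReflTransGen r a b := by
  induction hy with
  | refl => exact ⟨a, rfl, .refl⟩
  | tail _ hyz ih =>
    obtain ⟨b, rfl, hab⟩ := ih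
    obtain ⟨c, rfl, hbc⟩ := h b _ hyz
    exact ⟨c, rfl, hab.trans hbc⟩

lemma exists_forall_not_rel_of_acyclic (hr : ∀ x, ¬ TransGen r x x) {S : Finset α}
    (hS : S.Nonempty) : ∃ x ∈ S, ∀ y ∈ S, ¬ r y x := by
  have : IsStrictOrder α (TransGen r) :=
    { irrefl := hr, trans := fun _ _ _ => TransGen.trans }
  obtain ⟨x, hxS⟩ := hS
  obtain ⟨⟨z, hzS⟩, -, hmin⟩ :=
    (S.wellFoundedOn (r := TransGen r)).has_min Set.univ ⟨⟨x, hxS⟩, trivial⟩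
  exact ⟨z, hzS, fun y hyS hyz => hmin ⟨y, hyS⟩ trivial (.single hyz)⟩

lemma reflTransGen_of_forall_exists_rel (hr : ∀ x, ¬ TransGen r x x) {S : Finset α} {s : α}
    (h : ∀ x ∈ S, x ≠ s → ∃ y ∈ S, r y x) : ∀ x ∈ S, ReflTransGen r s x := by
  classical
  by_contra! ⟨x, hxS, hx⟩
  obtain ⟨z, hz, hmin⟩ := exists_forall_not_rel_of_acyclic hr
    (S := S.filter (¬ ReflTransGen r s ·)) ⟨x, Finset.mem_filter.2 ⟨hxS, hx⟩⟩
  rw [Finset.mem_filter] at hz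
  obtain ⟨y, hyS, hyz⟩ := h z hz.1 (by rintro rfl; exact hz.2 .refl)
  by_cases hy : ReflTransGen r s y
  · exact hz.2 (hy.tail hyz)
  · exact hmin y (Finset.mem_filter.2 ⟨hyS, hy⟩) hyz

end Relation

namespace AOE

variable {V T : Type}

lemma adj_mem (A : AOE V T) {a b : V} (h : A.adj a b) : a ∈ A.verts ∧ b ∈ A.verts := by
  rcases h with h | ⟨t, rfl, rfl⟩
  · exact A.unlMem _ h
  · exact ⟨A.stMem t, A.enMem t⟩

lemma adj_task (A : AOE V T) (t : T) : A.adj (A.St t) (A.En t) := .inr ⟨t, rfl, rfl⟩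

lemma mem_unl_of_adj_of_forall_st_ne {A : AOE V T} {a b : V} (h : A.adj a b)
    (ha : ∀ t, A.St t ≠ a) : (a, b) ∈ A.unl :=
  h.resolve_right fun ⟨t, ht, _⟩ => ha t ht

lemma mem_unl_of_adj_of_forall_en_ne {A : AOE V T} {a b : V} (h : A.adj a b)
    (hb : ∀ t, A.En t ≠ b) : (a, b) ∈ A.unl :=
  h.resolve_right fun ⟨t, _, ht⟩ => hb t ht

lemma Acyclic.ne {A : AOE V T} (hA : A.Acyclic) {a b : V} (h : A.adj a b) : a ≠ b := by
  rintro rfl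
  exact hA a (.single h)

def IsRoot (A : AOE V T) (s : V) : Prop :=
  s ∈ A.verts ∧ ∀ x ∈ A.verts, ReflTransGen A.adj s x

def IsCoroot (A : AOE V T) (e : V) : Prop :=
  e ∈ A.verts ∧ ∀ x ∈ A.verts, ReflTransGen A.adj x e

lemma isRoot_of_forall_not_adj {A : AOE V T} {s a : V} (hs : A.IsRoot s) (ha : a ∈ A.verts)
    (h : ∀ p, ¬ A.adj p a) : A.IsRoot a := by
  rcases (hs.2 a ha).cases_tail with rfl | ⟨p, -, hp⟩
  · exact hs
  · exact absurd hp (h p)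

lemma isCoroot_of_forall_not_adj {A : AOE V T} {e b : V} (he : A.IsCoroot e) (hb : b ∈ A.verts)
    (h : ∀ q, ¬ A.adj b q) : A.IsCoroot b := by
  rcases (he.2 b hb).cases_head with rfl | ⟨q, hq, -⟩
  · exact he
  · exact absurd hq (h q)

def EndOrSource (A : AOE V T) (a : V) : Prop := (∃ t, A.En t = a) ∨ ∀ p, ¬ A.adj p a

def StartOrSink (A : AOE V T) (b : V) : Prop := (∃ t, A.St t = b) ∨ ∀ q, ¬ A.adj b q

section DelUnl

variable [DecidableEq V] {A : AOE V T} {u v : V}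

lemma adj_of_delUnl_adj {a b : V} (h : (A.delUnl u v).adj a b) : A.adj a b :=
  h.imp_left Multiset.mem_of_mem_erase

lemma delUnl_adj_le : (A.delUnl u v).adj ≤ A.adj := fun _ _ => adj_of_delUnl_adj

lemma delUnl_adj_task (t : T) : (A.delUnl u v).adj (A.St t) (A.En t) := .inr ⟨t, rfl, rfl⟩

lemma delUnl_adj_or {a b : V} (h : A.adj a b) : (A.delUnl u v).adj a b ∨ a = u ∧ b = v := by
  by_cases he : (a, b) = (u, v)
  · exact .inr (Prod.ext_iff.1 he)
  · exact .inl (h.imp_left (Multiset.mem_erase_of_ne he).2)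

lemma delUnl_acyclic (hA : A.Acyclic) : (A.delUnl u v).Acyclic :=
  fun x hx => hA x (TransGen.mono delUnl_adj_le _ _ hx)

lemma EndOrSource.delUnl {a : V} (h : A.EndOrSource a) : (A.delUnl u v).EndOrSource a :=
  h.imp_right fun h p hp => h p (adj_of_delUnl_adj hp)

lemma StartOrSink.delUnl {b : V} (h : A.StartOrSink b) : (A.delUnl u v).StartOrSink b :=
  h.imp_right fun h q hq => h q (adj_of_delUnl_adj hq)

lemma reflTransGen_delUnl_or {a b : V} (h : ReflTransGen A.adj a b) :
    ReflTransGen (A.delUnl u v).adj a b ∨ ReflTransGen A.adj a u ∧ ReflTransGen A.adj v b :=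
  (reflTransGen_or_through (fun _ _ => delUnl_adj_or) h).imp_right
    (And.imp (ReflTransGen.mono delUnl_adj_le _ _) (ReflTransGen.mono delUnl_adj_le _ _))

/-- By acyclicity the path `u ⇝ p → q ⇝ v` cannot revisit `u` or `v`, so it avoids the edge
`(u, v)` as soon as its step `p → q` does. -/
lemma Acyclic.transGen_delUnl (hA : A.Acyclic) {p q : V} (hup : ReflTransGen A.adj u p)
    (hpq : (A.delUnl u v).adj p q) (hqv : ReflTransGen A.adj q v) :
    TransGen (A.delUnl u v).adj u v := by
  have hpq' := adj_of_delUnl_adj hpq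
  rcases reflTransGen_delUnl_or hup with hup' | ⟨-, hvp⟩
  · rcases reflTransGen_delUnl_or hqv with hqv' | ⟨hqu, -⟩
    · exact (TransGen.tail' hup' hpq).trans_left hqv'
    · exact absurd ((TransGen.tail' hup hpq').trans_left hqu) (hA u)
  · exact absurd ((TransGen.tail' hvp hpq').trans_left hqv) (hA v)

lemma Acyclic.transGen_delUnl_of_ne (hA : A.Acyclic) {m : V} (hum : ReflTransGen A.adj u m)
    (hmv : ReflTransGen A.adj m v) (hmu : m ≠ u) (hmv' : m ≠ v) :
    TransGen (A.delUnl u v).adj u v := by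
  obtain ⟨p, hup, hpm⟩ := hum.cases_tail.resolve_left hmu
  rcases delUnl_adj_or (u := u) (v := v) hpm with hpm | ⟨-, rfl⟩
  · exact hA.transGen_delUnl hup hpm hmv
  · exact absurd rfl hmv'

end DelUnl

end AOE

section Merge

variable {V T : Type} [DecidableEq V] {u v : V}

@[simp] lemma mergeV_left : mergeV u v u = u := by unfold mergeV; split_ifs <;> simp_all

@[simp] lemma mergeV_right : mergeV u v v = u := if_pos rfl

lemma mergeV_of_ne {x : V} (h : x ≠ v) : mergeV u v x = x := if_neg h

lemma mergeV_of_mem_pair {x : V} (h : x = u ∨ x = v) : mergeV u v x = u := by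
  rcases h with rfl | rfl <;> simp

lemma mergeV_eq_mergeV_iff {a b : V} :
    mergeV u v a = mergeV u v b ↔ a = b ∨ (a = u ∨ a = v) ∧ (b = u ∨ b = v) := by
  unfold mergeV; split_ifs <;> grind

lemma eq_of_mergeV_eq {a b : V} (h : mergeV u v a = mergeV u v b) (hu : b ≠ u) (hv : b ≠ v) :
    a = b := by
  grind [mergeV_eq_mergeV_iff]

namespace AOE

variable {A : AOE V T}

lemma merge_adj {a b : V} (h : A.adj a b) : (A.merge u v).adj (mergeV u v a) (mergeV u v b) := by
  rcases h with h | ⟨t, rfl, rfl⟩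
  · exact .inl (Multiset.mem_map.2 ⟨(a, b), h, rfl⟩)
  · exact .inr ⟨t, rfl, rfl⟩

lemma exists_adj_of_merge_adj {x y : V} (h : (A.merge u v).adj x y) :
    ∃ a b, A.adj a b ∧ mergeV u v a = x ∧ mergeV u v b = y := by
  rcases h with h | ⟨t, rfl, rfl⟩
  · obtain ⟨⟨a, b⟩, hab, he⟩ := Multiset.mem_map.1 h
    exact ⟨a, b, .inl hab, congrArg Prod.fst he, congrArg Prod.snd he⟩
  · exact ⟨_, _, A.adj_task t, rfl, rfl⟩

lemma exists_mem_unl_of_mem_merge_unl {e : V × V} (h : e ∈ (A.merge u v).unl) :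
    ∃ a b, (a, b) ∈ A.unl ∧ (mergeV u v a, mergeV u v b) = e := by
  obtain ⟨⟨a, b⟩, hab, rfl⟩ := Multiset.mem_map.1 h
  exact ⟨a, b, hab, rfl⟩

lemma endOrSource_merge {a : V} (h : ∀ a', mergeV u v a' = mergeV u v a → A.EndOrSource a') :
    (A.merge u v).EndOrSource (mergeV u v a) := by
  by_cases hT : ∃ t, mergeV u v (A.En t) = mergeV u v a
  · exact .inl hT
  refine .inr fun p hp => ?_
  obtain ⟨p', q', hpq, -, hq⟩ := exists_adj_of_merge_adj hp
  rcases h q' hq with ⟨t, rfl⟩ | hno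
  · exact hT ⟨t, hq⟩
  · exact hno p' hpq

lemma startOrSink_merge {b : V} (h : ∀ b', mergeV u v b' = mergeV u v b → A.StartOrSink b') :
    (A.merge u v).StartOrSink (mergeV u v b) := by
  by_cases hT : ∃ t, mergeV u v (A.St t) = mergeV u v b
  · exact .inl hT
  refine .inr fun q hq => ?_
  obtain ⟨p', q', hpq, hp, -⟩ := exists_adj_of_merge_adj hq
  rcases h p' hp with ⟨t, rfl⟩ | hno
  · exact hT ⟨t, hp⟩
  · exact hno q' hpq

end AOE

end Merge

namespace AOE

variable {V T : Type} {A B : AOE V T} {f : V → V}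

structure PathMap (A B : AOE V T) (f : V → V) : Prop where
  st : ∀ t, B.St t = f (A.St t)
  en : ∀ t, B.En t = f (A.En t)
  adj : ∀ a b, A.adj a b → ReflTransGen B.adj (f a) (f b)
  mapsTo : Set.MapsTo f A.verts B.verts
  surjOn : Set.SurjOn f A.verts B.verts

namespace PathMap

lemma reflTransGen (h : PathMap A B f) {a b : V} (hab : ReflTransGen A.adj a b) :
    ReflTransGen B.adj (f a) (f b) :=
  ReflTransGen.lift' f h.adj _ _ hab

lemma reach (h : PathMap A B f) {t t' : T} (ht : A.reach t t') : B.reach t t' := by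
  unfold AOE.reach
  rw [h.st, h.en]
  exact h.reflTransGen ht

lemma isRoot (h : PathMap A B f) {s : V} (hs : A.IsRoot s) : B.IsRoot (f s) := by
  refine ⟨h.mapsTo hs.1, fun y hy => ?_⟩
  obtain ⟨x, hx, rfl⟩ := h.surjOn hy
  exact h.reflTransGen (hs.2 x hx)

lemma isCoroot (h : PathMap A B f) {e : V} (he : A.IsCoroot e) : B.IsCoroot (f e) := by
  refine ⟨h.mapsTo he.1, fun y hy => ?_⟩
  obtain ⟨x, hx, rfl⟩ := h.surjOn hy
  exact h.reflTransGen (he.2 x hx)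

end PathMap

lemma pathMap_merge [DecidableEq V] {A' : AOE V T} {u v : V} (hverts : A'.verts = A.verts)
    (hSt : A'.St = A.St) (hEn : A'.En = A.En) (hu : u ∈ A.verts)
    (hadj : ∀ a b, A.adj a b → ReflTransGen (A'.merge u v).adj (mergeV u v a) (mergeV u v b)) :
    PathMap A (A'.merge u v) (mergeV u v) where
  st t := by simp [AOE.merge, hSt]
  en t := by simp [AOE.merge, hEn]
  adj := hadj
  mapsTo x hx := by
    simpa only [AOE.merge, hverts, Finset.mem_coe] using mergeV_mem u v x (S := A.verts) hx
  surjOn y hy := by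
    simp only [AOE.merge, hverts, Finset.coe_insert, Finset.coe_erase, Set.mem_insert_iff,
      Set.mem_sdiff, Finset.mem_coe, Set.mem_singleton_iff] at hy
    rcases hy with rfl | ⟨hy, hyv⟩
    · exact ⟨y, hu, mergeV_left⟩
    · exact ⟨y, hy, mergeV_of_ne hyv⟩

lemma pathMap_merge_self [DecidableEq V] {u v : V} (hu : u ∈ A.verts) :
    PathMap A (A.merge u v) (mergeV u v) :=
  pathMap_merge rfl rfl rfl hu fun _ _ hab => .single (merge_adj hab)

end AOE

section TaskRelation

variable {T : Type} (R : T → T → Prop)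

def NoTaskBetween (t t' : T) : Prop := ¬ ∃ c, c ≠ t ∧ c ≠ t' ∧ R t c ∧ R c t'

def Bottleneck (t t' : T) : Prop := ∀ w z, R w t' → R t z → R w z

/-- With `R = A.reach` for an output AOE `A`, this holds exactly when `En a = St b`. -/
def RequiresMerge (a b : T) : Prop := a ≠ b ∧ R a b ∧ NoTaskBetween R a b ∧ Bottleneck R a b

/-- With `R = A.reach` for an output AOE `A`, this holds exactly when `(En t, St t')` is an
unlabeled edge. The last clause rules out a route from `t` to `t'` through a merged vertex
`En a = St b`. -/
def RequiresEdge (t t' : T) : Prop :=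
  t ≠ t' ∧ R t t' ∧ NoTaskBetween R t t' ∧ ¬ Bottleneck R t t' ∧
    ¬ ∃ a b, RequiresMerge R a b ∧ R t b ∧ R a t' ∧ ¬ RequiresMerge R t b ∧
      ¬ RequiresMerge R a t'

end TaskRelation

namespace AOE

variable {V T : Type}

structure WellFormed (A : AOE V T) : Prop where
  acyclic : A.Acyclic
  endOrSource : ∀ e ∈ A.unl, A.EndOrSource e.1
  startOrSink : ∀ e ∈ A.unl, A.StartOrSink e.2
  requiresMerge : ∀ a b, A.En a = A.St b → RequiresMerge A.reach a b
  root : ∃ s, A.IsRoot s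
  coroot : ∃ e, A.IsCoroot e

end AOE

namespace Rule1OutCond

open AOE

variable {V T : Type} {A : AOE V T} {u v : V}

lemma st_ne (h : Rule1OutCond A u v) {x : V} (hx : x = u ∨ x = v) (t : T) : A.St t ≠ x := by
  rcases hx with rfl | rfl
  exacts [h.2.2.2.1 t, h.2.2.2.2.1 t]

variable [DecidableEq V]

lemma adj_iff (h : Rule1OutCond A u v) {a b : V} (hab : mergeV u v a = mergeV u v b) (w : V) :
    A.adj a w ↔ A.adj b w := by
  rcases mergeV_eq_mergeV_iff.1 hab with rfl | ⟨rfl | rfl, rfl | rfl⟩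
  all_goals first | exact Iff.rfl | exact h.2.2.2.2.2 w | exact (h.2.2.2.2.2 w).symm

lemma exists_reflTransGen (h : Rule1OutCond A u v) {a y : V}
    (hy : ReflTransGen (A.merge u v).adj (mergeV u v a) y) :
    ∃ b, mergeV u v b = y ∧ ReflTransGen A.adj a b := by
  refine exists_reflTransGen_of_lift _ (fun a _ hay => ?_) hy
  obtain ⟨p, q, hpq, hp, rfl⟩ := exists_adj_of_merge_adj hay
  exact ⟨q, rfl, .single ((h.adj_iff hp q).1 hpq)⟩

lemma reach_merge (h : Rule1OutCond A u v) : (A.merge u v).reach = A.reach := by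
  ext t t'
  refine ⟨fun ht => ?_, (pathMap_merge_self h.1).reach⟩
  obtain ⟨b, hb, hab⟩ := h.exists_reflTransGen ht
  rwa [eq_of_mergeV_eq hb (h.st_ne (.inl rfl) t') (h.st_ne (.inr rfl) t')] at hab

lemma acyclic_merge (h : Rule1OutCond A u v) (hA : A.Acyclic) : (A.merge u v).Acyclic := by
  intro x hx
  obtain ⟨y, hxy, hyx⟩ := TransGen.head'_iff.1 hx
  obtain ⟨p, q, hpq, rfl, rfl⟩ := exists_adj_of_merge_adj hxy
  obtain ⟨b, hb, hqb⟩ := h.exists_reflTransGen hyx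
  exact hA b (.head' ((h.adj_iff hb q).2 hpq) hqb)

lemma wellFormed_merge (h : Rule1OutCond A u v) (hA : A.WellFormed) :
    (A.merge u v).WellFormed where
  acyclic := h.acyclic_merge hA.acyclic
  endOrSource e he := by
    obtain ⟨a, b, hab, rfl⟩ := exists_mem_unl_of_mem_merge_unl he
    refine endOrSource_merge fun a' ha' => ?_
    rcases mergeV_eq_mergeV_iff.1 ha' with rfl | ⟨ha'uv, -⟩
    · exact hA.endOrSource _ hab
    · exact hA.endOrSource (a', b)
        (mem_unl_of_adj_of_forall_st_ne ((h.adj_iff ha' b).2 (.inl hab)) (h.st_ne ha'uv))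
  startOrSink e he := by
    obtain ⟨a, b, hab, rfl⟩ := exists_mem_unl_of_mem_merge_unl he
    refine startOrSink_merge fun b' hb' => ?_
    rcases mergeV_eq_mergeV_iff.1 hb' with rfl | ⟨-, hbuv⟩
    · exact hA.startOrSink _ hab
    · refine .inr fun q hq => ?_
      rcases hA.startOrSink _ hab with ⟨t, ht⟩ | hb
      · exact h.st_ne hbuv t ht
      · exact hb q ((h.adj_iff hb' q).1 hq)
  requiresMerge a b hab := by
    rw [h.reach_merge]
    exact hA.requiresMerge a b (eq_of_mergeV_eq hab (h.st_ne (.inl rfl) b) (h.st_ne (.inr rfl) b))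
  root := let ⟨_, hs⟩ := hA.root; ⟨_, (pathMap_merge_self h.1).isRoot hs⟩
  coroot := let ⟨_, he⟩ := hA.coroot; ⟨_, (pathMap_merge_self h.1).isCoroot he⟩

end Rule1OutCond

namespace Rule1InCond

open AOE

variable {V T : Type} {A : AOE V T} {u v : V}

lemma en_ne (h : Rule1InCond A u v) {x : V} (hx : x = u ∨ x = v) (t : T) : A.En t ≠ x := by
  rcases hx with rfl | rfl
  exacts [h.2.2.2.1 t, h.2.2.2.2.1 t]

variable [DecidableEq V]

lemma adj_iff (h : Rule1InCond A u v) {a b : V} (hab : mergeV u v a = mergeV u v b) (w : V) :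
    A.adj w a ↔ A.adj w b := by
  rcases mergeV_eq_mergeV_iff.1 hab with rfl | ⟨rfl | rfl, rfl | rfl⟩
  all_goals first | exact Iff.rfl | exact h.2.2.2.2.2 w | exact (h.2.2.2.2.2 w).symm

lemma exists_reflTransGen (h : Rule1InCond A u v) {x b : V}
    (hx : ReflTransGen (A.merge u v).adj x (mergeV u v b)) :
    ∃ a, mergeV u v a = x ∧ ReflTransGen A.adj a b := by
  have hlift : ∀ b x, Function.swap (A.merge u v).adj (mergeV u v b) x →
      ∃ a, mergeV u v a = x ∧ ReflTransGen (Function.swap A.adj) b a := by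
    intro b x hxb
    obtain ⟨p, q, hpq, rfl, hq⟩ := exists_adj_of_merge_adj hxb
    exact ⟨p, rfl, .single ((h.adj_iff hq p).1 hpq)⟩
  obtain ⟨a, ha, hba⟩ := exists_reflTransGen_of_lift _ hlift (reflTransGen_swap.2 hx)
  exact ⟨a, ha, reflTransGen_swap.1 hba⟩

lemma reach_merge (h : Rule1InCond A u v) : (A.merge u v).reach = A.reach := by
  ext t t'
  refine ⟨fun ht => ?_, (pathMap_merge_self h.1).reach⟩
  obtain ⟨a, ha, hab⟩ := h.exists_reflTransGen ht
  rwa [eq_of_mergeV_eq ha (h.en_ne (.inl rfl) t) (h.en_ne (.inr rfl) t)] at hab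

lemma acyclic_merge (h : Rule1InCond A u v) (hA : A.Acyclic) : (A.merge u v).Acyclic := by
  intro x hx
  obtain ⟨y, hxy, hyx⟩ := TransGen.tail'_iff.1 hx
  obtain ⟨p, q, hpq, rfl, rfl⟩ := exists_adj_of_merge_adj hyx
  obtain ⟨a, ha, hap⟩ := h.exists_reflTransGen hxy
  exact hA a (.tail' hap ((h.adj_iff ha p).2 hpq))

lemma wellFormed_merge (h : Rule1InCond A u v) (hA : A.WellFormed) :
    (A.merge u v).WellFormed where
  acyclic := h.acyclic_merge hA.acyclic
  endOrSource e he := by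
    obtain ⟨a, b, hab, rfl⟩ := exists_mem_unl_of_mem_merge_unl he
    refine endOrSource_merge fun a' ha' => ?_
    rcases mergeV_eq_mergeV_iff.1 ha' with rfl | ⟨-, hauv⟩
    · exact hA.endOrSource _ hab
    · refine .inr fun p hp => ?_
      rcases hA.endOrSource _ hab with ⟨t, ht⟩ | ha
      · exact h.en_ne hauv t ht
      · exact ha p ((h.adj_iff ha' p).1 hp)
  startOrSink e he := by
    obtain ⟨a, b, hab, rfl⟩ := exists_mem_unl_of_mem_merge_unl he
    refine startOrSink_merge fun b' hb' => ?_
    rcases mergeV_eq_mergeV_iff.1 hb' with rfl | ⟨hb'uv, -⟩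
    · exact hA.startOrSink _ hab
    · exact hA.startOrSink (a, b')
        (mem_unl_of_adj_of_forall_en_ne ((h.adj_iff hb' a).2 (.inl hab)) (h.en_ne hb'uv))
  requiresMerge a b hab := by
    rw [h.reach_merge]
    exact hA.requiresMerge a b
      (eq_of_mergeV_eq hab.symm (h.en_ne (.inl rfl) a) (h.en_ne (.inr rfl) a)).symm
  root := let ⟨_, hs⟩ := hA.root; ⟨_, (pathMap_merge_self h.1).isRoot hs⟩
  coroot := let ⟨_, he⟩ := hA.coroot; ⟨_, (pathMap_merge_self h.1).isCoroot he⟩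

end Rule1InCond

namespace Rule2Cond

open AOE

variable {V T : Type} [DecidableEq V] {A : AOE V T} {u v : V}

lemma reflTransGen_of_adj (h : Rule2Cond A u v) {a b : V} (hab : A.adj a b) :
    ReflTransGen (A.delUnl u v).adj a b := by
  rcases delUnl_adj_or (u := u) (v := v) hab with hab | ⟨rfl, rfl⟩
  · exact .single hab
  · exact h.2.to_reflTransGen

lemma pathMap (h : Rule2Cond A u v) : PathMap A (A.delUnl u v) id where
  st _ := rfl
  en _ := rfl
  adj _ _ := h.reflTransGen_of_adj
  mapsTo := Set.mapsTo_id _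
  surjOn := Set.surjOn_id _

lemma reach_delUnl (h : Rule2Cond A u v) : (A.delUnl u v).reach = A.reach := by
  ext t t'
  exact ⟨ReflTransGen.mono delUnl_adj_le _ _, h.pathMap.reach⟩

lemma wellFormed_delUnl (h : Rule2Cond A u v) (hA : A.WellFormed) :
    (A.delUnl u v).WellFormed where
  acyclic := delUnl_acyclic hA.acyclic
  endOrSource e he := (hA.endOrSource e (Multiset.mem_of_mem_erase he)).delUnl
  startOrSink e he := (hA.startOrSink e (Multiset.mem_of_mem_erase he)).delUnl
  requiresMerge a b hab := h.reach_delUnl ▸ hA.requiresMerge a b hab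
  root := let ⟨_, hs⟩ := hA.root; ⟨_, h.pathMap.isRoot hs⟩
  coroot := let ⟨_, he⟩ := hA.coroot; ⟨_, h.pathMap.isCoroot he⟩

end Rule2Cond

namespace Rule3Cond

open AOE

variable {V T : Type} [DecidableEq V] {A : AOE V T} {u v : V}

lemma adj (h : Rule3Cond A u v) : A.adj u v := .inl h.1

lemma pathMap (h : Rule3Cond A u v) : PathMap A ((A.delUnl u v).merge u v) (mergeV u v) := by
  refine pathMap_merge rfl rfl rfl (A.unlMem _ h.1).1 fun a b hab => ?_
  rcases delUnl_adj_or (u := u) (v := v) hab with hab | ⟨rfl, rfl⟩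
  · exact .single (merge_adj hab)
  · rw [mergeV_left, mergeV_right]

lemma reflTransGen_of_mergeV_eq (h : Rule3Cond A u v) {a b : V}
    (hab : mergeV u v a = mergeV u v b) :
    ReflTransGen (fun x y => A.adj x y ∨ x = v ∧ y = u) a b := by
  rcases mergeV_eq_mergeV_iff.1 hab with rfl | ⟨rfl | rfl, rfl | rfl⟩
  all_goals first | exact .refl | exact .single (.inl h.adj) | exact .single (.inr ⟨rfl, rfl⟩)

/-- A path of the merged graph lifts to `A` extended by the reversed edge `v → u`; splitting it
at the first and last use of that edge gives the alternative. -/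
lemma reflTransGen_of_merge (h : Rule3Cond A u v) {a b : V}
    (hab : ReflTransGen ((A.delUnl u v).merge u v).adj (mergeV u v a) (mergeV u v b)) :
    ReflTransGen A.adj a b ∨ ReflTransGen A.adj a v ∧ ReflTransGen A.adj u b := by
  have hlift : ∀ a y, ((A.delUnl u v).merge u v).adj (mergeV u v a) y →
      ∃ b, mergeV u v b = y ∧ ReflTransGen (fun x y => A.adj x y ∨ x = v ∧ y = u) a b := by
    intro a y hay
    obtain ⟨p, q, hpq, hp, rfl⟩ := exists_adj_of_merge_adj hay
    exact ⟨q, rfl, (h.reflTransGen_of_mergeV_eq hp.symm).tail (.inl (adj_of_delUnl_adj hpq))⟩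
  obtain ⟨b', hb', hab'⟩ := exists_reflTransGen_of_lift _ hlift hab
  exact reflTransGen_or_through (fun _ _ => id) (hab'.trans (h.reflTransGen_of_mergeV_eq hb'))

lemma reflTransGen_en_st (h : Rule3Cond A u v) {t t' : T}
    (h1 : ReflTransGen A.adj (A.En t) v) (h2 : ReflTransGen A.adj u (A.St t')) :
    ReflTransGen A.adj (A.En t) (A.St t') := by
  obtain ⟨-, -, hSt, hEn, hjoin⟩ := h
  by_cases htv : A.En t = v
  · obtain ⟨hStu, hout⟩ := hEn ⟨t, htv⟩
    obtain ⟨z, huz, hz⟩ := h2.cases_head.resolve_left (Ne.symm (hStu t'))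
    have hzv : z = v := by
      rcases huz with huz | ⟨x, hx, -⟩
      exacts [hout z huz, absurd hx (hStu x)]
    rwa [htv, ← hzv]
  obtain ⟨c, hc, hcv⟩ := h1.cases_tail.resolve_left (Ne.symm htv)
  rcases h2.cases_head with hu | ⟨z, huz, hz⟩
  · obtain ⟨hEnv, hin⟩ := hSt ⟨t', hu.symm⟩
    have hcu : c = u := by
      rcases hcv with hcv | ⟨x, -, hx⟩
      exacts [hin c hcv, absurd hx (hEnv x)]
    rwa [← hu, ← hcu]
  · exact hc.trans ((hjoin c z hcv huz).trans hz)

lemma reach_merge (h : Rule3Cond A u v) : ((A.delUnl u v).merge u v).reach = A.reach := by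
  ext t t'
  refine ⟨fun ht => ?_, h.pathMap.reach⟩
  rcases h.reflTransGen_of_merge ht with ht | ⟨h1, h2⟩
  exacts [ht, h.reflTransGen_en_st h1 h2]

lemma acyclic_merge (h : Rule3Cond A u v) (hA : A.Acyclic) :
    ((A.delUnl u v).merge u v).Acyclic := by
  intro x hx
  obtain ⟨y, hxy, hyx⟩ := TransGen.head'_iff.1 hx
  obtain ⟨p, q, hpq, rfl, rfl⟩ := exists_adj_of_merge_adj hxy
  rcases h.reflTransGen_of_merge hyx with hqp | ⟨hqv, hup⟩
  · exact hA p (.head' (adj_of_delUnl_adj hpq) hqp)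
  · exact h.2.1 (hA.transGen_delUnl hup hpq hqv)

lemma requiresMerge (h : Rule3Cond A u v) (hA : A.Acyclic) {a b : T} (ha : A.En a = u)
    (hb : A.St b = v) : RequiresMerge A.reach a b := by
  refine ⟨?_, ?_, ?_, fun w z hw hz => ?_⟩
  · rintro rfl
    have hvu := A.adj_task a
    rw [ha, hb] at hvu
    exact hA v (.head' hvu (.single h.adj))
  · show ReflTransGen A.adj (A.En a) (A.St b)
    rw [ha, hb]
    exact .single h.adj
  · rintro ⟨c, -, -, hac, hcb⟩
    unfold AOE.reach at hac hcb
    rw [ha] at hac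
    rw [hb] at hcb
    exact h.2.1 (hA.transGen_delUnl hac (delUnl_adj_task c) hcb)
  · unfold AOE.reach at hw hz
    rw [hb] at hw
    rw [ha] at hz
    exact h.reflTransGen_en_st hw hz

lemma not_delUnl_adj_right (h : Rule3Cond A u v) (hA : A.Acyclic) (hu : A.IsRoot u) (p : V) :
    ¬ (A.delUnl u v).adj p v := fun hp =>
  h.2.1 (hA.transGen_delUnl (hu.2 p ((A.delUnl u v).adj_mem hp).1) hp .refl)

lemma not_delUnl_adj_left (h : Rule3Cond A u v) (hA : A.Acyclic) (hv : A.IsCoroot v) (q : V) :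
    ¬ (A.delUnl u v).adj u q := fun hq =>
  h.2.1 (hA.transGen_delUnl .refl hq (hv.2 q ((A.delUnl u v).adj_mem hq).2))

lemma endOrSource_merge (h : Rule3Cond A u v) (hA : A.WellFormed) {a b : V}
    (hab : (a, b) ∈ (A.delUnl u v).unl) :
    ((A.delUnl u v).merge u v).EndOrSource (mergeV u v a) := by
  rcases em (a = u ∨ a = v) with hauv | hauv
  swap
  · refine AOE.endOrSource_merge fun a' ha' => ?_
    rw [eq_of_mergeV_eq ha' (fun e => hauv (.inl e)) (fun e => hauv (.inr e))]
    exact (hA.endOrSource _ (Multiset.mem_of_mem_erase hab)).delUnl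
  by_cases hu : ∃ t, A.En t = u
  · obtain ⟨t, ht⟩ := hu
    exact .inl ⟨t, show mergeV u v (A.En t) = _ by
      rw [ht, mergeV_left, mergeV_of_mem_pair hauv]⟩
  refine AOE.endOrSource_merge fun a' ha' => .inr ?_
  have hno : ∀ p, ¬ A.adj p u := (hA.endOrSource _ h.1).resolve_left hu
  have hroot : A.IsRoot u :=
    let ⟨_, hs⟩ := hA.root; isRoot_of_forall_not_adj hs (A.unlMem _ h.1).1 hno
  rcases (mergeV_eq_mergeV_iff.1 ha').elim (fun e => e ▸ hauv) And.left with rfl | rfl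
  · exact fun p hp => hno p (adj_of_delUnl_adj hp)
  · exact h.not_delUnl_adj_right hA.acyclic hroot

lemma startOrSink_merge (h : Rule3Cond A u v) (hA : A.WellFormed) {a b : V}
    (hab : (a, b) ∈ (A.delUnl u v).unl) :
    ((A.delUnl u v).merge u v).StartOrSink (mergeV u v b) := by
  rcases em (b = u ∨ b = v) with hbuv | hbuv
  swap
  · refine AOE.startOrSink_merge fun b' hb' => ?_
    rw [eq_of_mergeV_eq hb' (fun e => hbuv (.inl e)) (fun e => hbuv (.inr e))]
    exact (hA.startOrSink _ (Multiset.mem_of_mem_erase hab)).delUnl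
  by_cases hv : ∃ t, A.St t = v
  · obtain ⟨t, ht⟩ := hv
    exact .inl ⟨t, show mergeV u v (A.St t) = _ by
      rw [ht, mergeV_right, mergeV_of_mem_pair hbuv]⟩
  refine AOE.startOrSink_merge fun b' hb' => .inr ?_
  have hno : ∀ q, ¬ A.adj v q := (hA.startOrSink _ h.1).resolve_left hv
  have hcoroot : A.IsCoroot v :=
    let ⟨_, he⟩ := hA.coroot; isCoroot_of_forall_not_adj he (A.unlMem _ h.1).2 hno
  rcases (mergeV_eq_mergeV_iff.1 hb').elim (fun e => e ▸ hbuv) And.left with rfl | rfl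
  · exact h.not_delUnl_adj_left hA.acyclic hcoroot
  · exact fun q hq => hno q (adj_of_delUnl_adj hq)

lemma wellFormed_merge (h : Rule3Cond A u v) (hA : A.WellFormed) :
    ((A.delUnl u v).merge u v).WellFormed where
  acyclic := h.acyclic_merge hA.acyclic
  endOrSource e he := by
    obtain ⟨a, b, hab, rfl⟩ := exists_mem_unl_of_mem_merge_unl he
    exact h.endOrSource_merge hA hab
  startOrSink e he := by
    obtain ⟨a, b, hab, rfl⟩ := exists_mem_unl_of_mem_merge_unl he
    exact h.startOrSink_merge hA hab
  requiresMerge a b hab := by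
    rw [h.reach_merge]
    rcases mergeV_eq_mergeV_iff.1 hab with hab | ⟨ha | ha, hb | hb⟩
    · exact hA.requiresMerge a b hab
    · exact hA.requiresMerge a b (ha.trans hb.symm)
    · exact h.requiresMerge hA.acyclic ha hb
    · exact absurd ha ((h.2.2.1 ⟨b, hb⟩).1 a)
    · exact hA.requiresMerge a b (ha.trans hb.symm)
  root := let ⟨_, hs⟩ := hA.root; ⟨_, h.pathMap.isRoot hs⟩
  coroot := let ⟨_, he⟩ := hA.coroot; ⟨_, h.pathMap.isCoroot he⟩

end Rule3Cond

namespace Step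

variable {V T : Type} [DecidableEq V] {A B : AOE V T}

lemma wellFormed (h : Step A B) (hA : A.WellFormed) : B.WellFormed := by
  cases h with
  | rule1out u v h => exact h.wellFormed_merge hA
  | rule1in u v h => exact h.wellFormed_merge hA
  | rule2 u v h => exact h.wellFormed_delUnl hA
  | rule3 u v h => exact h.wellFormed_merge hA

lemma reach_eq (h : Step A B) : B.reach = A.reach := by
  cases h with
  | rule1out u v h => exact h.reach_merge
  | rule1in u v h => exact h.reach_merge
  | rule2 u v h => exact h.reach_delUnl
  | rule3 u v h => exact h.reach_merge

end Step

namespace AOE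

variable {V T : Type} {G : AOE V T}

lemma WellFormed.reflTransGen_step [DecidableEq V] {A : AOE V T} (hG : G.WellFormed)
    (h : ReflTransGen Step G A) : A.WellFormed ∧ A.reach = G.reach := by
  induction h with
  | refl => exact ⟨hG, rfl⟩
  | tail _ hBC ih => exact ⟨hBC.wellFormed ih.1, hBC.reach_eq.trans ih.2⟩

lemma exists_adj_to_of_source_iff {s : V} (hs : s ∈ G.verts)
    (hsiff : ∀ b, (s, b) ∈ G.unl ↔
      b ∈ G.verts ∧ b ≠ s ∧ (∀ t, G.En t ≠ b) ∧ ∀ a, (a, b) ∈ G.unl → a = s)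
    {x : V} (hx : x ∈ G.verts) (hxs : x ≠ s) : ∃ y ∈ G.verts, G.adj y x := by
  by_contra! hno
  have hEn : ∀ t, G.En t ≠ x := fun t ht => hno _ (G.stMem t) (ht ▸ G.adj_task t)
  exact hno s hs (.inl ((hsiff x).2
    ⟨hx, hxs, hEn, fun a ha => absurd (.inl ha) (hno a (G.unlMem _ ha).1)⟩))

lemma exists_adj_from_of_sink_iff {e : V} (he : e ∈ G.verts)
    (heiff : ∀ a, (a, e) ∈ G.unl ↔
      a ∈ G.verts ∧ a ≠ e ∧ (∀ t, G.St t ≠ a) ∧ ∀ b, (a, b) ∈ G.unl → b = e)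
    {x : V} (hx : x ∈ G.verts) (hxe : x ≠ e) : ∃ y ∈ G.verts, G.adj x y := by
  by_contra! hno
  have hSt : ∀ t, G.St t ≠ x := fun t ht => hno _ (G.enMem t) (ht ▸ G.adj_task t)
  exact hno e he (.inl ((heiff x).2
    ⟨hx, hxe, hSt, fun b hb => absurd (.inl hb) (hno b (G.unlMem _ hb).2)⟩))

end AOE

namespace Canonical

variable {V T : Type} [DecidableEq V] [Fintype T] {G : AOE V T}

lemma endOrSource (hC : Canonical G) : ∀ e ∈ G.unl, G.EndOrSource e.1 := by
  obtain ⟨hA, -, -, -, -, s, e, hse, -, -, hTask, hverts, hstruct, -, heiff⟩ := hC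
  rintro ⟨a, b⟩ hab
  by_cases has : a = s
  · subst has
    refine .inr ?_
    rintro p (hpa | ⟨t, -, ht⟩)
    · by_cases hp : p = a
      · exact hA.ne (.inl hpa) hp
      · obtain ⟨-, t, ht⟩ := hstruct p a hpa hp hse
        exact (hTask t).1 ht
    · exact (hTask t).2.2.1 ht
  refine .inl ?_
  by_cases hbe : b = e
  · subst hbe
    obtain ⟨ha, hae, hSt, -⟩ := (heiff a).1 hab
    have : a = s ∨ a = b ∨ (∃ t, G.St t = a) ∨ ∃ t, G.En t = a := by
      simpa [hverts] using ha
    rcases this with h | h | ⟨t, ht⟩ | h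
    exacts [absurd h has, absurd h hae, absurd ht (hSt t), h]
  · exact (hstruct a b hab has hbe).1

lemma startOrSink (hC : Canonical G) : ∀ e ∈ G.unl, G.StartOrSink e.2 := by
  obtain ⟨hA, -, -, -, -, s, e, hse, -, -, hTask, hverts, hstruct, hsiff, -⟩ := hC
  rintro ⟨a, b⟩ hab
  by_cases hbe : b = e
  · subst hbe
    refine .inr ?_
    rintro q (hbq | ⟨t, ht, -⟩)
    · by_cases hq : q = b
      · exact hA.ne (.inl hbq) hq.symm
      · obtain ⟨⟨t, ht⟩, -⟩ := hstruct b q hbq (Ne.symm hse) hq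
        exact (hTask t).2.2.2 ht
    · exact (hTask t).2.1 ht
  refine .inl ?_
  by_cases has : a = s
  · subst has
    obtain ⟨hb, hbs, hEn, -⟩ := (hsiff b).1 hab
    have : b = a ∨ b = e ∨ (∃ t, G.St t = b) ∨ ∃ t, G.En t = b := by
      simpa [hverts] using hb
    rcases this with h | h | h | ⟨t, ht⟩
    exacts [absurd h hbs, absurd h hbe, h, absurd ht (hEn t)]
  · exact (hstruct a b hab has hbe).2

lemma exists_isRoot (hC : Canonical G) : ∃ s, G.IsRoot s := by
  obtain ⟨hA, -, -, -, -, s, -, -, hs, -, -, -, -, hsiff, -⟩ := hC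
  exact ⟨s, hs, reflTransGen_of_forall_exists_rel hA
    fun x hx => G.exists_adj_to_of_source_iff hs hsiff hx⟩

lemma exists_isCoroot (hC : Canonical G) : ∃ e, G.IsCoroot e := by
  obtain ⟨hA, -, -, -, -, -, e, -, -, he, -, -, -, -, heiff⟩ := hC
  refine ⟨e, he, fun x hx => reflTransGen_swap.1 ?_⟩
  exact reflTransGen_of_forall_exists_rel (r := Function.swap G.adj)
    (fun y hy => hA y (transGen_swap.1 hy)) (fun x hx => G.exists_adj_from_of_sink_iff he heiff hx)
    x hx

lemma wellFormed (hC : Canonical G) : G.WellFormed where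
  acyclic := hC.1
  endOrSource := hC.endOrSource
  startOrSink := hC.startOrSink
  requiresMerge a b hab := absurd hab.symm (hC.2.2.2.2.1 b a)
  root := hC.exists_isRoot
  coroot := hC.exists_isCoroot

end Canonical

namespace AOE

variable {V T : Type} {A : AOE V T} {t t' x y : T}

lemma reach_of_en_eq_st (h : A.En t = A.St t') : A.reach t t' := by
  unfold reach
  rw [h]

lemma reach_of_mem_unl (h : (A.En t, A.St t') ∈ A.unl) : A.reach t t' := .single (.inl h)

lemma Acyclic.ne_of_reach (hA : A.Acyclic) (h : A.reach t t') : t ≠ t' := by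
  rintro rfl
  exact hA _ (.head' (A.adj_task t) h)

lemma Acyclic.not_noTaskBetween (hA : A.Acyclic) (h1 : A.reach t y) (h2 : A.reach y t') :
    ¬ NoTaskBetween A.reach t t' :=
  fun hmid => hmid ⟨y, (hA.ne_of_reach h1).symm, hA.ne_of_reach h2, h1, h2⟩

lemma WellFormed.mem_unl_or_exists (hA : A.WellFormed) (hne : A.En t ≠ A.St t')
    (hreach : A.reach t t') (hmid : NoTaskBetween A.reach t t') :
    (A.En t, A.St t') ∈ A.unl ∨
      ∃ c d, (A.En t, A.St c) ∈ A.unl ∧ A.En d = A.St c ∧ A.St c ≠ A.St t' ∧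
        A.reach d t' := by
  obtain ⟨x, hx, hxt'⟩ :=
    TransGen.head'_iff.1 ((reflTransGen_iff_eq_or_transGen.1 hreach).resolve_left hne.symm)
  rcases hx with hx | ⟨y, hy, rfl⟩
  · by_cases hxt : x = A.St t'
    · exact .inl (hxt ▸ hx)
    obtain ⟨x₂, hxx₂, hx₂⟩ := hxt'.cases_head.resolve_left hxt
    rcases hxx₂ with hxx₂ | ⟨y, rfl, rfl⟩
    · obtain ⟨c, rfl⟩ := (hA.startOrSink _ hx).resolve_right fun h => h _ (.inl hxx₂)
      obtain ⟨d, hd⟩ := (hA.endOrSource _ hxx₂).resolve_right fun h => h _ (.inl hx)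
      exact .inr ⟨c, d, hx, hd, hxt, by rwa [reach, hd]⟩
    · exact absurd hmid (hA.acyclic.not_noTaskBetween (reach_of_mem_unl hx) hx₂)
  · exact absurd hmid (hA.acyclic.not_noTaskBetween (reach_of_en_eq_st hy.symm) hxt')

end AOE

namespace Bottleneck

open AOE

variable {V T : Type} {A : AOE V T} {t t' x y : T}

lemma reflTransGen_st (hA : A.WellFormed) (hQ : Bottleneck A.reach t t') {w : V}
    (hw : A.adj w (A.St t')) (hx : A.reach t x) : ReflTransGen A.adj w (A.St x) := by
  rcases hw with hw | ⟨y, rfl, hy⟩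
  · rcases hA.endOrSource _ hw with ⟨y, rfl⟩ | hno
    · exact hQ y x (reach_of_mem_unl hw) hx
    · obtain ⟨s, hs⟩ := hA.root
      exact (isRoot_of_forall_not_adj hs (A.unlMem _ hw).1 hno).2 _ (A.stMem x)
  · exact .head (A.adj_task y) (hQ y x (reach_of_en_eq_st hy) hx)

lemma reflTransGen_en (hA : A.WellFormed) (hQ : Bottleneck A.reach t t') {z : V}
    (hz : A.adj (A.En t) z) (hy : A.reach y t') : ReflTransGen A.adj (A.En y) z := by
  rcases hz with hz | ⟨x, hx, rfl⟩
  · rcases hA.startOrSink _ hz with ⟨x, rfl⟩ | hno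
    · exact hQ y x hy (reach_of_mem_unl hz)
    · obtain ⟨e, he⟩ := hA.coroot
      exact (isCoroot_of_forall_not_adj he (A.unlMem _ hz).2 hno).2 _ (A.enMem y)
  · exact .tail (hQ y x hy (reach_of_en_eq_st hx.symm)) (A.adj_task x)

lemma reflTransGen (hA : A.WellFormed) (hQ : Bottleneck A.reach t t') {w z : V}
    (hw : A.adj w (A.St t')) (hz : A.adj (A.En t) z) : ReflTransGen A.adj w z := by
  rcases hz with hz | ⟨x, hx, rfl⟩
  · rcases hA.startOrSink _ hz with ⟨x, rfl⟩ | hno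
    · exact hQ.reflTransGen_st hA hw (reach_of_mem_unl hz)
    · obtain ⟨e, he⟩ := hA.coroot
      exact (isCoroot_of_forall_not_adj he (A.unlMem _ hz).2 hno).2 _ (A.adj_mem hw).1
  · exact .tail (hQ.reflTransGen_st hA hw (reach_of_en_eq_st hx.symm)) (A.adj_task x)

end Bottleneck

namespace AOE

variable {V T : Type} [DecidableEq V] {A : AOE V T} {t t' : T}

lemma not_transGen_delUnl_of_terminal (hterm : ∀ B, ¬ Step A B) {p q : V}
    (hpq : (p, q) ∈ A.unl) : ¬ TransGen (A.delUnl p q).adj p q :=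
  fun h => hterm _ (.rule2 p q ⟨hpq, h⟩)

lemma WellFormed.rule3Cond_of_bottleneck (hA : A.WellFormed) (hterm : ∀ B, ¬ Step A B)
    (he : (A.En t, A.St t') ∈ A.unl) (hQ : Bottleneck A.reach t t') :
    Rule3Cond A (A.En t) (A.St t') := by
  have hne := hA.acyclic.ne (.inl he)
  have hcycle : ∀ x y, A.St x = A.En t → A.En y = A.St t' → False := fun x y hx hy => by
    have hyx := hQ y x (reach_of_en_eq_st hy) (reach_of_en_eq_st hx.symm)
    unfold reach at hyx
    rw [hx, hy] at hyx
    exact hA.acyclic _ (.head' (.inl he) hyx)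
  refine ⟨he, not_transGen_delUnl_of_terminal hterm he,
    fun ⟨x, hx⟩ => ⟨fun y hy => hcycle x y hx hy, fun w hw => ?_⟩,
    fun ⟨y, hy⟩ => ⟨fun x hx => hcycle x y hx hy, fun z hz => ?_⟩,
    fun w z hw hz => hQ.reflTransGen hA hw hz⟩
  · by_contra hwu
    have hwu' : ReflTransGen A.adj w (A.En t) := by
      simpa [hx] using hQ.reflTransGen_st hA (.inl hw) (reach_of_en_eq_st hx.symm)
    exact not_transGen_delUnl_of_terminal hterm hw
      (hA.acyclic.transGen_delUnl_of_ne hwu' (.single (.inl he)) (Ne.symm hwu) hne)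
  · by_contra hzv
    have hvz : ReflTransGen A.adj (A.St t') z := by
      simpa [hy] using hQ.reflTransGen_en hA (.inl hz) (reach_of_en_eq_st hy)
    exact not_transGen_delUnl_of_terminal hterm hz
      (hA.acyclic.transGen_delUnl_of_ne (.single (.inl he)) hvz hne.symm (Ne.symm hzv))

lemma WellFormed.not_bottleneck (hA : A.WellFormed) (hterm : ∀ B, ¬ Step A B)
    (he : (A.En t, A.St t') ∈ A.unl) : ¬ Bottleneck A.reach t t' :=
  fun hQ => hterm _ (.rule3 _ _ (hA.rule3Cond_of_bottleneck hterm he hQ))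

lemma WellFormed.en_eq_st_of_requiresMerge (hA : A.WellFormed) (hterm : ∀ B, ¬ Step A B)
    {a b : T} (h : RequiresMerge A.reach a b) : A.En a = A.St b := by
  obtain ⟨-, hreach, hmid, hQ⟩ := h
  by_contra hne
  rcases hA.mem_unl_or_exists hne hreach hmid with he | ⟨c, d, he, hdc, -, hdb⟩
  · exact hA.not_bottleneck hterm he hQ
  · refine hA.not_bottleneck hterm he fun w z hw hz => hQ w z ?_ hz
    exact (hA.requiresMerge d c hdc).2.2.2 w b hw hdb

lemma WellFormed.requiresEdge_of_mem_unl (hA : A.WellFormed) (hterm : ∀ B, ¬ Step A B)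
    (he : (A.En t, A.St t') ∈ A.unl) : RequiresEdge A.reach t t' := by
  have hdetour := not_transGen_delUnl_of_terminal hterm he
  refine ⟨hA.acyclic.ne_of_reach (reach_of_mem_unl he), reach_of_mem_unl he, ?_,
    hA.not_bottleneck hterm he, ?_⟩
  · rintro ⟨c, -, -, h1, h2⟩
    exact hdetour (hA.acyclic.transGen_delUnl h1 (delUnl_adj_task c) h2)
  · rintro ⟨a, b, hab, htb, hat', hntb, hnat'⟩
    have hm := hA.en_eq_st_of_requiresMerge hterm hab
    unfold reach at hat'
    rw [hm] at hat'
    exact hdetour (hA.acyclic.transGen_delUnl_of_ne htb hat'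
      (fun h => hntb (hA.requiresMerge t b h.symm))
      (fun h => hnat' (hA.requiresMerge a t' (hm.trans h))))

lemma WellFormed.mem_unl_of_requiresEdge (hA : A.WellFormed) (hterm : ∀ B, ¬ Step A B)
    (h : RequiresEdge A.reach t t') : (A.En t, A.St t') ∈ A.unl := by
  obtain ⟨-, hreach, hmid, hQ, hnw⟩ := h
  have hne : A.En t ≠ A.St t' := fun h => hQ (hA.requiresMerge t t' h).2.2.2
  rcases hA.mem_unl_or_exists hne hreach hmid with he | ⟨c, d, he, hdc, hct', hdt'⟩
  · exact he
  refine (hnw ⟨d, c, hA.requiresMerge d c hdc, reach_of_mem_unl he, hdt', fun h => ?_,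
    fun h => ?_⟩).elim
  · exact hA.acyclic.ne (.inl he) (hA.en_eq_st_of_requiresMerge hterm h)
  · exact hct' (hdc.symm.trans (hA.en_eq_st_of_requiresMerge hterm h))

end AOE

/-- Any two output AOEs arising from the same canonical AOE have the same
unlabeled edges: if `(u, v)` is an unlabeled edge of `A₁` with `u = End(T)` and
`v = St(T')`, then `A₂` has an unlabeled edge from `End(T)` to `St(T')`. -/
theorem stmt14 {V T : Type} [DecidableEq V] [Fintype T] (G A₁ A₂ : AOE V T)
    (h₁ : IsOutput G A₁) (h₂ : IsOutput G A₂) :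
    ∀ u v : V, (u, v) ∈ A₁.unl → ∀ t t' : T, A₁.En t = u → A₁.St t' = v →
      (A₂.En t, A₂.St t') ∈ A₂.unl := by
  rintro u v huv t t' rfl rfl
  obtain ⟨hG, hGA₁, hterm₁⟩ := h₁
  obtain ⟨-, hGA₂, hterm₂⟩ := h₂
  obtain ⟨hA₁, hreach₁⟩ := hG.wellFormed.reflTransGen_step hGA₁
  obtain ⟨hA₂, hreach₂⟩ := hG.wellFormed.reflTransGen_step hGA₂
  apply hA₂.mem_unl_of_requiresEdge hterm₂
  rw [hreach₂, ← hreach₁]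
  exact hA₁.requiresEdge_of_mem_unl hterm₁ huv

end AOEPaper
end

section
/- Let G be a directed multigraph with task-labeled and unlabeled edges whose directed cycles consist only of unlabeled edges, and let C be a set of vertices lying on a common directed cycle of unlabeled edges in G. Let G' be the graph obtained from G by merging all vertices of C into a single vertex. Then G and G' have the same reachability relation on their tasks: for all tasks T ≠ T', T reaches T' in G if and only if T reaches T' in G', and |V(G')| < |V(G)|. -/
namespace AOEPaper

/-!
Every vertex of `C` lies on one directed cycle, so `C` is strongly connected and each fibre of
the collapse map `mergeSetV C c` is strongly connected. A path of the merged graph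
lifts edge by edge to `G`: consecutive lifted edges end and start in the same fibre, and the gap
is bridged by a path inside `C`. Conversely the collapse map sends edges to edges.
-/

open Relation

theorem _root_.List.IsChain.reflTransGen_of_mem_cycle {α : Type*} {r : α → α → Prop} {a : α}
    {l : List α} (h : List.IsChain r (a :: (l ++ [a]))) {x y : α} (hx : x ∈ a :: l)
    (hy : y ∈ a :: l) : ReflTransGen r x y := by
  have hmem : ∀ z ∈ a :: l, z ∈ a :: (l ++ [a]) := by simp +contextual [or_imp]
  have to_a : ∀ z ∈ a :: (l ++ [a]), ReflTransGen r z a :=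
    h.backwards_induction _ _ (fun _ _ hr hp => hp.head hr)
      (fun _ => by simpa using ReflTransGen.refl)
  have from_a : ∀ z ∈ a :: (l ++ [a]), ReflTransGen r a z :=
    h.induction _ _ (fun _ _ hr hp => hp.tail hr) (fun _ => .refl)
  exact (to_a x (hmem x hx)).trans (from_a y (hmem y hy))

theorem _root_.Relation.reflTransGen_map_iff {α β : Type*} {r : α → α → Prop}
    {f : α → β}
    (hfibre : ∀ a b, f a = f b → ReflTransGen r a b) {a b : α} :
    ReflTransGen (Relation.Map r f f) (f a) (f b) ↔ ReflTransGen r a b := by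
  refine ⟨fun h => ?_, ReflTransGen.lift f (le_onFun_map f) a b⟩
  suffices ∀ {a' b'}, ReflTransGen (Relation.Map r f f) a' b' →
      ∀ a b, f a = a' → f b = b' → ReflTransGen r a b from this h a b rfl rfl
  intro a' b' h
  induction h using ReflTransGen.head_induction_on with
  | refl => exact fun a b ha hb => hfibre a b (ha.trans hb.symm)
  | head hstep _ ih =>
    obtain ⟨p, q, hpq, rfl, rfl⟩ := hstep
    exact fun a b ha hb => (hfibre a p ha).trans (.head hpq (ih q b rfl hb))

variable {V T : Type} [DecidableEq V]

def mergeSetV (C : Finset V) (c x : V) : V := if x ∈ C then c else x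

theorem reflTransGen_of_mergeSetV_eq {r : V → V → Prop} {C : Finset V} {c : V} (hc : c ∈ C)
    (hC : ∀ x ∈ C, ∀ y ∈ C, ReflTransGen r x y) {x y : V}
    (h : mergeSetV C c x = mergeSetV C c y) : ReflTransGen r x y := by
  unfold mergeSetV at h
  split_ifs at h with hx hy hy
  · exact hC x hx y hy
  · exact absurd (h ▸ hc) hy
  · exact absurd (h ▸ hc) hx
  · exact h ▸ .refl

theorem AOE.adj_mergeSet (G : AOE V T) (C : Finset V) (c : V) :
    (G.mergeSet C c).adj = Relation.Map G.adj (mergeSetV C c) (mergeSetV C c) := by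
  ext a' b'
  constructor
  · rintro (h | ⟨t, rfl, rfl⟩)
    · obtain ⟨⟨a, b⟩, hab, heq⟩ := Multiset.mem_map.1 h
      exact ⟨a, b, Or.inl hab, congrArg Prod.fst heq, congrArg Prod.snd heq⟩
    · exact ⟨G.St t, G.En t, Or.inr ⟨t, rfl, rfl⟩, rfl, rfl⟩
  · rintro ⟨a, b, hab | ⟨t, rfl, rfl⟩, rfl, rfl⟩
    · exact Or.inl (Multiset.mem_map.2 ⟨(a, b), hab, rfl⟩)
    · exact Or.inr ⟨t, rfl, rfl⟩

theorem AOE.reach_mergeSet_iff (G : AOE V T) {C : Finset V} {c : V} (hc : c ∈ C)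
    (hC : ∀ x ∈ C, ∀ y ∈ C, ReflTransGen G.adj x y) (t t' : T) :
    (G.mergeSet C c).reach t t' ↔ G.reach t t' := by
  rw [AOE.reach, AOE.adj_mergeSet]
  exact reflTransGen_map_iff fun _ _ => reflTransGen_of_mergeSetV_eq hc hC

theorem AOE.card_verts_mergeSet_lt (G : AOE V T) {C : Finset V} (hsub : C ⊆ G.verts)
    (hcard : 2 ≤ C.card) (c : V) : (G.mergeSet C c).verts.card < G.verts.card := by
  have hdiff : (G.verts \ C).card = G.verts.card - C.card := Finset.card_sdiff_of_subset hsub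
  have hins : (insert c (G.verts \ C)).card ≤ (G.verts \ C).card + 1 := Finset.card_insert_le _ _
  have hle : C.card ≤ G.verts.card := Finset.card_le_card hsub
  change (insert c (G.verts \ C)).card < _
  omega

theorem stmt16_general {V T : Type} [DecidableEq V] (G : AOE V T)
    (C : Finset V) (hsub : C ⊆ G.verts) (hcard : 2 ≤ C.card) (c : V) (hc : c ∈ C)
    (hcyc : ∃ (a : V) (l : List V),
      List.Chain (fun x y => (x, y) ∈ G.unl) a (l ++ [a]) ∧ ∀ x ∈ C, x ∈ a :: l) :
    (∀ t t' : T, t ≠ t' → (G.reach t t' ↔ (G.mergeSet C c).reach t t')) ∧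
      (G.mergeSet C c).verts.card < G.verts.card := by
  obtain ⟨a, l, hchain, hmem⟩ := hcyc
  have hC : ∀ x ∈ C, ∀ y ∈ C, ReflTransGen G.adj x y := fun x hx y hy =>
    ReflTransGen.mono (fun _ _ => Or.inl) _ _
      (hchain.reflTransGen_of_mem_cycle (hmem x hx) (hmem y hy))
  exact ⟨fun t t' _ => (G.reach_mergeSet_iff hc hC t t').symm,
    G.card_verts_mergeSet_lt hsub hcard c⟩

/-- In a directed multigraph whose directed cycles consist only of
unlabeled edges, merging a set `C` (of at least two vertices) lying on a common directed
cycle of unlabeled edges into a single vertex preserves the reachability relation on the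
tasks and strictly decreases the number of vertices. -/
theorem stmt16 {V T : Type} [DecidableEq V] (G : AOE V T)
    (honlyUnl : ∀ t : T, ¬ Relation.ReflTransGen G.adj (G.En t) (G.St t))
    (C : Finset V) (hsub : C ⊆ G.verts) (hcard : 2 ≤ C.card) (c : V) (hc : c ∈ C)
    (hcyc : ∃ (a : V) (l : List V),
      List.Chain (fun x y => (x, y) ∈ G.unl) a (l ++ [a]) ∧ ∀ x ∈ C, x ∈ a :: l) :
    (∀ t t' : T, t ≠ t' → (G.reach t t' ↔ (G.mergeSet C c).reach t t')) ∧
      (G.mergeSet C c).verts.card < G.verts.card :=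
  stmt16_general G C hsub hcard c hc hcyc

end AOEPaper
end
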